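/- arXiv:2112.11970 — 2 statements merged into one kernel-verified Lean document; each statement's English description precedes it below -/
import Mathlib

section
/- Let G be an m-necklace with m ≥ 4, and suppose G is given an orientation in which every hole has exactly two sources and two sinks, where moreover in every hole three of these four extrema are consecutive vertices of the hole. Then a contradiction arises; hence no m-necklace with m ≥ 4 admits such an orientation. -/
namespace BurlingFormal

open SimpleGraph

/-- An orientation of a simple graph, given as a relation choosing a direction for each edge. -/
def IsOrientation {V : Type} (G : SimpleGraph V) (A : V → V → Prop) : Prop :=
  (∀ u v, A u v → G.Adj u v) ∧ (∀ u v, G.Adj u v → (A u v ↔ ¬ A v u))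

/-- A chordless cycle: a cycle such that every adjacency between its vertices is a cycle edge. -/
def IsChordlessCycle {V : Type} (G : SimpleGraph V) {v : V} (c : G.Walk v v) : Prop :=
  c.IsCycle ∧ ∀ x y, x ∈ c.support → y ∈ c.support → G.Adj x y → s(x, y) ∈ c.edges

/-- A hole: a chordless cycle of length at least 4. -/
def IsHole {V : Type} (G : SimpleGraph V) {v : V} (c : G.Walk v v) : Prop :=
  IsChordlessCycle G c ∧ 4 ≤ c.length

/-- A source of a hole w.r.t. an orientation: both its neighbours on the hole are out-neighbours. -/
def IsHoleSource {V : Type} {G : SimpleGraph V} {v : V} (A : V → V → Prop)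
    (c : G.Walk v v) (x : V) : Prop :=
  x ∈ c.support ∧ ∀ y, s(x, y) ∈ c.edges → A x y

/-- A sink of a hole w.r.t. an orientation: both its neighbours on the hole are in-neighbours. -/
def IsHoleSink {V : Type} {G : SimpleGraph V} {v : V} (A : V → V → Prop)
    (c : G.Walk v v) (x : V) : Prop :=
  x ∈ c.support ∧ ∀ y, s(x, y) ∈ c.edges → A y x

/-- An extremum of a hole: a source or a sink of it. -/
def IsHoleExtremum {V : Type} {G : SimpleGraph V} {v : V} (A : V → V → Prop)
    (c : G.Walk v v) (x : V) : Prop :=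
  IsHoleSource A c x ∨ IsHoleSink A c x

/-- The hole has exactly two sources and exactly two sinks. -/
def TwoSourcesTwoSinks {V : Type} {G : SimpleGraph V} {v : V} (A : V → V → Prop)
    (c : G.Walk v v) : Prop :=
  (∃ s₁ s₂, s₁ ≠ s₂ ∧ IsHoleSource A c s₁ ∧ IsHoleSource A c s₂ ∧
    ∀ s, IsHoleSource A c s → s = s₁ ∨ s = s₂) ∧
  (∃ t₁ t₂, t₁ ≠ t₂ ∧ IsHoleSink A c t₁ ∧ IsHoleSink A c t₂ ∧
    ∀ t, IsHoleSink A c t → t = t₁ ∨ t = t₂)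

/-- The pivot of a hole: a sink adjacent on the hole to all of its sources. -/
def IsHolePivot {V : Type} {G : SimpleGraph V} {v : V} (A : V → V → Prop)
    (c : G.Walk v v) (x : V) : Prop :=
  IsHoleSink A c x ∧ ∀ y, IsHoleSource A c y → s(x, y) ∈ c.edges

/-- A subordinate vertex of a hole: neither an antenna (source) nor the pivot. -/
def IsHoleSubordinate {V : Type} {G : SimpleGraph V} {v : V} (A : V → V → Prop)
    (c : G.Walk v v) (x : V) : Prop :=
  x ∈ c.support ∧ ¬ IsHoleSource A c x ∧ ¬ IsHolePivot A c x

/-- `S` is the vertex set of a (possibly empty) branch (downward path) starting at `u`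
in the rooted tree given by the parent function. -/
def IsBranchFrom {V : Type} (parent : V → V) (u : V) (S : Set V) : Prop :=
  S = ∅ ∨ (u ∈ S ∧ (∀ w ∈ S, w ≠ u → parent w ∈ S ∧ parent w ≠ w) ∧
    ∀ w ∈ S, ∀ w' ∈ S, w ≠ u → w' ≠ u → parent w = parent w' → w = w')

/-- A Burling tree: a rooted tree (given by a parent function) together with a last-born
function and a choose function assigning to each non-last-born non-root vertex the vertex set
of a branch starting at the last-born of its parent. -/
structure BurlingTree (V : Type) where
  parent : V → V
  root : V
  parent_root : parent root = root
  reach : ∀ v, ∃ n, parent^[n] v = root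
  lastBorn : V → V
  lastBorn_child : ∀ v, (∃ u, u ≠ v ∧ parent u = v) → parent (lastBorn v) = v ∧ lastBorn v ≠ v
  choosePath : V → Set V
  choosePath_empty : ∀ v, v = root ∨ v = lastBorn (parent v) → choosePath v = ∅
  choosePath_branch : ∀ v, v ≠ root → v ≠ lastBorn (parent v) →
    IsBranchFrom parent (lastBorn (parent v)) (choosePath v)

/-- The arcs of the oriented graph fully derived from a Burling tree. -/
def BurlingTree.Arc {V : Type} (T : BurlingTree V) (u v : V) : Prop :=
  v ∈ T.choosePath u

/-- `A` orients `G` so that `G` with this orientation is an oriented graph derived from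
some Burling tree (an oriented Burling graph). -/
def IsOrientedBurling {W : Type} (G : SimpleGraph W) (A : W → W → Prop) : Prop :=
  IsOrientation G A ∧
    ∃ (V : Type) (T : BurlingTree V) (f : W ↪ V), ∀ u v, A u v ↔ T.Arc (f u) (f v)

/-- A Burling graph (equivalently, a derived graph): the underlying graph of an oriented
graph derived from a Burling tree. -/
def IsBurlingGraph {W : Type} (G : SimpleGraph W) : Prop :=
  ∃ A, IsOrientedBurling G A

/-- A global subordinate vertex of a Burling graph: subordinate in some hole, for every
orientation of the graph as an oriented Burling graph. -/
def IsGlobalSubordinate {W : Type} (G : SimpleGraph W) (x : W) : Prop :=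
  ∀ A, IsOrientedBurling G A →
    ∃ (v : W) (c : G.Walk v v), IsHole G c ∧ IsHoleSubordinate A c x

/-- `H` is a subdivision of `G` via the branch-vertex embedding `f` and the system of
paths `P` replacing the edges of `G`. -/
def IsSubdivisionVia {V W : Type} (H : SimpleGraph W) (G : SimpleGraph V) (f : V ↪ W)
    (P : ∀ ⦃u v : V⦄, G.Adj u v → H.Walk (f u) (f v)) : Prop :=
  (∀ ⦃u v⦄ (h : G.Adj u v), (P h).IsPath ∧ 1 ≤ (P h).length) ∧
  (∀ ⦃u v⦄ (h : G.Adj u v) (x : V), f x ∈ (P h).support → x = u ∨ x = v) ∧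
  (∀ ⦃u v u' v'⦄ (h : G.Adj u v) (h' : G.Adj u' v'), s(u, v) ≠ s(u', v') →
    ∀ w, w ∈ (P h).support → w ∈ (P h').support → ∃ x : V, w = f x) ∧
  (∀ w : W, ∃ u v, ∃ h : G.Adj u v, w ∈ (P h).support) ∧
  (∀ ⦃x y : W⦄, H.Adj x y → ∃ u v, ∃ h : G.Adj u v, s(x, y) ∈ (P h).edges)

/-- `H` is a subdivision of `G`. -/
def IsSubdivision {V W : Type} (H : SimpleGraph W) (G : SimpleGraph V) : Prop :=
  ∃ (f : V ↪ W) (P : ∀ ⦃u v : V⦄, G.Adj u v → H.Walk (f u) (f v)), IsSubdivisionVia H G f P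

/-- `G` contains an induced copy of `H`. -/
def InducedCopy {V W : Type} (H : SimpleGraph W) (G : SimpleGraph V) : Prop :=
  ∃ f : W ↪ V, ∀ a b, H.Adj a b ↔ G.Adj (f a) (f b)

/-- The clique number of a graph. -/
noncomputable def cliqueNumber {V : Type} (G : SimpleGraph V) : ℕ :=
  sSup {n | ∃ s : Finset V, G.IsNClique n s}

/-- `G` belongs to `Forb*(H)`: it has no induced subdivision of `H`. -/
def InForbs {VH V : Type} (H : SimpleGraph VH) (G : SimpleGraph V) : Prop :=
  ∀ (U : Type) (S : SimpleGraph U), IsSubdivision S H → ¬ InducedCopy S G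

/-- `H` is weakly pervasive: the class `Forb*(H)` (of finite graphs) is χ-bounded. -/
def WeaklyPervasive {VH : Type} (H : SimpleGraph VH) : Prop :=
  ∃ f : ℕ → ℕ, ∀ (V : Type) (_ : Fintype V) (G : SimpleGraph V),
    InForbs H G → G.chromaticNumber ≤ (f (cliqueNumber G) : ℕ∞)

/-- `G` has a star cutset centered at `v`. -/
def HasStarCutsetAt {V : Type} (G : SimpleGraph V) (v : V) : Prop :=
  ∃ S : Set V, v ∈ S ∧ (∀ u ∈ S, u = v ∨ G.Adj v u) ∧ ¬ (G.induce Sᶜ).Preconnected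

/-- `G` has a star cutset. -/
def HasStarCutset {V : Type} (G : SimpleGraph V) : Prop :=
  ∃ v, HasStarCutsetAt G v

/-- The structure of an `m`-necklace on the graph `G`: beads `B i` (chordless cycles of
length at least 4 through the non-adjacent vertices `a i`, `b i`) joined cyclically by
paths `P i` from `b i` to `a (i+1)` (of length possibly 0, i.e. identification),
with no further vertices or edges. -/
structure Necklace {V : Type} (G : SimpleGraph V) (m : ℕ) where
  a : ZMod m → V
  b : ZMod m → V
  B : ∀ i, G.Walk (a i) (a i)
  P : ∀ i, G.Walk (b i) (a (i + 1))
  B_cycle : ∀ i, (B i).IsCycle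
  B_len : ∀ i, 4 ≤ (B i).length
  b_mem : ∀ i, b i ∈ (B i).support
  ab_ne : ∀ i, a i ≠ b i
  ab_nonadj : ∀ i, ¬ G.Adj (a i) (b i)
  P_path : ∀ i, (P i).IsPath
  bead_disjoint : ∀ i j, i ≠ j → ∀ x, x ∈ (B i).support → x ∈ (B j).support →
    (j = i + 1 ∧ x = b i ∧ x = a j) ∨ (i = j + 1 ∧ x = b j ∧ x = a i)
  path_bead_disjoint : ∀ i j (x : V), x ∈ (P i).support → x ∈ (B j).support →
    x = b i ∨ x = a (i + 1)
  path_disjoint : ∀ i j, i ≠ j → ∀ x, x ∈ (P i).support → x ∈ (P j).support →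
    (x = b i ∨ x = a (i + 1)) ∧ (x = b j ∨ x = a (j + 1))
  cover_vertex : ∀ x : V, (∃ i, x ∈ (B i).support) ∨ ∃ i, x ∈ (P i).support
  cover_edge : ∀ x y, G.Adj x y → (∃ i, s(x, y) ∈ (B i).edges) ∨ ∃ i, s(x, y) ∈ (P i).edges

/-- The bead `B i` of a necklace is short if `a i` and `b i` have a common neighbour. -/
def Necklace.Short {V : Type} {G : SimpleGraph V} {m : ℕ} (N : Necklace G m)
    (i : ZMod m) : Prop :=
  ∃ w, G.Adj (N.a i) w ∧ G.Adj (N.b i) w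

/-- A chandelier: an in-tree (given by a parent function on `V \ {hub}`) with at least two
leaves, together with an extra vertex `hub` joined to all the leaves. -/
structure Chandelier (V : Type) where
  hub : V
  root : V
  parent : V → V
  hub_ne_root : hub ≠ root
  parent_root : parent root = root
  parent_hub : parent hub = hub
  parent_ne_hub : ∀ u, u ≠ hub → parent u ≠ hub
  reach : ∀ u, u ≠ hub → ∃ n, parent^[n] u = root
  two_leaves : ∃ l₁ l₂ : V, l₁ ≠ l₂ ∧
    (l₁ ≠ hub ∧ l₁ ≠ root ∧ ∀ w, parent w = l₁ → w = l₁) ∧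
    (l₂ ≠ hub ∧ l₂ ≠ root ∧ ∀ w, parent w = l₂ → w = l₂)

/-- A leaf of the in-tree of a chandelier. -/
def Chandelier.IsLeaf {V : Type} (C : Chandelier V) (u : V) : Prop :=
  u ≠ C.hub ∧ u ≠ C.root ∧ ∀ w, C.parent w = u → w = u

/-- The arcs of (the oriented version of) a chandelier. -/
def Chandelier.Arc {V : Type} (C : Chandelier V) (u w : V) : Prop :=
  (u ≠ C.hub ∧ u ≠ C.root ∧ w = C.parent u) ∨ (C.IsLeaf u ∧ w = C.hub)

/-- The underlying (non-oriented) graph of a chandelier. -/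
def Chandelier.graph {V : Type} (C : Chandelier V) : SimpleGraph V :=
  SimpleGraph.fromRel C.Arc

/-- There is a vertex lying on every cycle of the graph. -/
def HasUniversalCycleVertex {V : Type} (G : SimpleGraph V) : Prop :=
  ∃ x : V, ∀ (w : V) (c : G.Walk w w), c.IsCycle → x ∈ c.support

/-- A Burling-admissible type-4 subdivision of `K₄` sitting inside `G`: branch vertices
`x, y, z, w`, where the two non-subdivided edges `xy`, `xz` share the endpoint `x`, and the
four other edges are replaced by internally disjoint paths of length at least 2. -/
structure Type4K4Core {V : Type} (G : SimpleGraph V) where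
  x : V
  y : V
  z : V
  w : V
  ne_xy : x ≠ y
  ne_xz : x ≠ z
  ne_xw : x ≠ w
  ne_yz : y ≠ z
  ne_yw : y ≠ w
  ne_zw : z ≠ w
  adj_xy : G.Adj x y
  adj_xz : G.Adj x z
  Pxw : G.Walk x w
  Pyz : G.Walk y z
  Pyw : G.Walk y w
  Pzw : G.Walk z w
  Pxw_path : Pxw.IsPath
  Pyz_path : Pyz.IsPath
  Pyw_path : Pyw.IsPath
  Pzw_path : Pzw.IsPath
  Pxw_len : 2 ≤ Pxw.length
  Pyz_len : 2 ≤ Pyz.length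
  Pyw_len : 2 ≤ Pyw.length
  Pzw_len : 2 ≤ Pzw.length
  d₁ : ∀ v, v ∈ Pxw.support → v ∈ Pyz.support → False
  d₂ : ∀ v, v ∈ Pxw.support → v ∈ Pyw.support → v = w
  d₃ : ∀ v, v ∈ Pxw.support → v ∈ Pzw.support → v = w
  d₄ : ∀ v, v ∈ Pyz.support → v ∈ Pyw.support → v = y
  d₅ : ∀ v, v ∈ Pyz.support → v ∈ Pzw.support → v = z
  d₆ : ∀ v, v ∈ Pyw.support → v ∈ Pzw.support → v = w

/-- The vertex set of a type-4 `K₄`-subdivision configuration. -/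
def Type4K4Core.supp {V : Type} {G : SimpleGraph V} (c : Type4K4Core G) : Set V :=
  {v | v ∈ c.Pxw.support ∨ v ∈ c.Pyz.support ∨ v ∈ c.Pyw.support ∨ v ∈ c.Pzw.support}

/-- The edge set of a type-4 `K₄`-subdivision configuration. -/
def Type4K4Core.edges {V : Type} {G : SimpleGraph V} (c : Type4K4Core G) : Set (Sym2 V) :=
  {e | e ∈ c.Pxw.edges ∨ e ∈ c.Pyz.edges ∨ e ∈ c.Pyw.edges ∨ e ∈ c.Pzw.edges ∨
    e = s(c.x, c.y) ∨ e = s(c.x, c.z)}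

/-- The configuration exhausts the whole graph `G`. -/
def Type4K4Core.Spanning {V : Type} {G : SimpleGraph V} (c : Type4K4Core G) : Prop :=
  (∀ v : V, v ∈ c.supp) ∧ ∀ u v, G.Adj u v → s(u, v) ∈ c.edges

/-- A vertex of degree exactly 2. -/
def DegTwo {V : Type} (G : SimpleGraph V) (x : V) : Prop :=
  ∃ p q, p ≠ q ∧ G.Adj x p ∧ G.Adj x q ∧ ∀ r, G.Adj x r → r = p ∨ r = q

/-
Every bead is a hole, so it has four extrema, and one of them, `e i`, differs from `a i` and
`b i`. All edges at `e i` lie in the bead. Going around the necklace through the half of each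
bead that contains `e i` gives a hole `C` on which every `e i` is still an extremum. Since `C` has
at most four extrema and `m ≥ 4`, the extrema of `C` are exactly the `e i`. Two of them are
consecutive on `C`, but no two of the `e i` are adjacent.
-/

end BurlingFormal

namespace SimpleGraph.Walk

variable {V : Type} {G : SimpleGraph V}

lemma two_le_length_of_not_adj {u v : V} (p : G.Walk u v) (huv : u ≠ v) (h : ¬ G.Adj u v) :
    2 ≤ p.length := by
  by_contra! hlt
  interval_cases hp : p.length
  · exact huv (eq_of_length_eq_zero hp)
  · exact h (adj_of_length_eq_one hp)

lemma IsPath.ne_of_mem_support_tail {u v x : V} {p : G.Walk u v} (hp : p.IsPath)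
    (hx : x ∈ p.support.tail) : x ≠ u := by
  rintro rfl
  have hnodup := hp.support_nodup
  rw [← cons_tail_support] at hnodup
  exact (List.nodup_cons.mp hnodup).1 hx

lemma isCycle_of_support_tail_nodup {u : V} (c : G.Walk u u) (hlen : 3 ≤ c.length)
    (hc : c.support.tail.Nodup) : c.IsCycle := by
  cases c with
  | nil => simp at hlen
  | cons h p =>
    have hp : p.IsPath := IsPath.mk' (by simpa using hc)
    refine (cons_isCycle_iff p h).mpr ⟨hp, fun he => ?_⟩
    have := hp.length_eq_one_of_mem_edges (Sym2.eq_swap ▸ he)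
    simp only [length_cons] at hlen
    omega

lemma IsCycle.eq_or_eq_of_mem_takeUntil_of_mem_dropUntil [DecidableEq V] {v w x : V}
    {c : G.Walk v v} (hc : c.IsCycle) (hw : w ∈ c.support)
    (hxT : x ∈ (c.takeUntil w hw).support) (hxD : x ∈ (c.dropUntil w hw).support) :
    x = v ∨ x = w := by
  rw [mem_support_iff] at hxT hxD
  rcases hxT with h | hT
  · exact .inl h
  rcases hxD with h | hD
  · exact .inr h
  have hnodup := hc.support_nodup
  conv at hnodup => rw [← c.take_spec hw, tail_support_append]
  exact ((List.nodup_append.mp hnodup).2.2 x hT x hD rfl).elim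

/-- When `v` and `w` are not adjacent, the halves of a cycle between them are induced paths. -/
lemma IsCycle.exists_isPath_of_mem_support {v w x : V} {c : G.Walk v v}
    (hc : c.IsCycle) (hw : w ∈ c.support) (hvw : v ≠ w) (hadj : ¬ G.Adj v w)
    (hx : x ∈ c.support) :
    ∃ q : G.Walk v w, q.IsPath ∧ x ∈ q.support ∧ (∀ y ∈ q.support, y ∈ c.support) ∧
      ∀ y z, y ∈ q.support → z ∈ q.support → s(y, z) ∈ c.edges → s(y, z) ∈ q.edges := by
  classical
  set T := c.takeUntil w hw
  set D := c.dropUntil w hw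
  have hspec : T.append D = c := c.take_spec hw
  have hchord : ∀ y z, y ∈ T.support → y ∈ D.support → z ∈ T.support → z ∈ D.support →
      s(y, z) ∉ c.edges := by
    intro y z hyT hyD hzT hzD he
    have hyz := c.adj_of_mem_edges he
    rcases hc.eq_or_eq_of_mem_takeUntil_of_mem_dropUntil hw hyT hyD with rfl | rfl <;>
      rcases hc.eq_or_eq_of_mem_takeUntil_of_mem_dropUntil hw hzT hzD with rfl | rfl
    exacts [hyz.ne rfl, hadj hyz, hadj hyz.symm, hyz.ne rfl]
  have hedges : ∀ e, e ∈ c.edges ↔ e ∈ T.edges ∨ e ∈ D.edges := by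
    intro e
    rw [← hspec, edges_append, List.mem_append]
  rw [← hspec, mem_support_append_iff] at hx
  rcases hx with hxT | hxD
  · refine ⟨T, hc.isPath_takeUntil hw, hxT,
      fun y hy => c.support_takeUntil_subset_support hw hy,
      fun y z hy hz he => ((hedges _).mp he).resolve_right fun heD => ?_⟩
    exact hchord y z hy (D.fst_mem_support_of_mem_edges heD) hz
      (D.snd_mem_support_of_mem_edges heD) he
  · refine ⟨D.reverse, ((hspec ▸ hc).isPath_of_append_right (not_nil_of_ne hvw)).reverse,
      by simpa using hxD,
      fun y hy => c.support_dropUntil_subset_support hw (by simpa using hy),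
      fun y z hy hz he => ?_⟩
    rw [support_reverse, List.mem_reverse] at hy hz
    rw [edges_reverse, List.mem_reverse]
    refine ((hedges _).mp he).resolve_left fun heT => ?_
    exact hchord y z (T.fst_mem_support_of_mem_edges heT) hy
      (T.snd_mem_support_of_mem_edges heT) hz he

section CyclicConcat

variable {m : ℕ} (a : ZMod m → V) (R : ∀ i : ZMod m, G.Walk (a i) (a (i + 1)))

def chain : (n : ℕ) → G.Walk (a 0) (a n)
  | 0 => nil.copy rfl (by rw [Nat.cast_zero])
  | n + 1 => (chain n).append ((R n).copy rfl (by push_cast; rfl))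

def cyclicConcat : G.Walk (a 0) (a 0) :=
  (chain a R m).copy rfl (by rw [ZMod.natCast_self])

lemma support_chain (n : ℕ) :
    (chain a R n).support = a 0 :: (List.range n).flatMap fun k : ℕ => (R k).support.tail := by
  induction n with
  | zero => simp [chain]
  | succ n ih => simp [chain, support_append, ih, List.range_succ]

lemma edges_chain (n : ℕ) :
    (chain a R n).edges = (List.range n).flatMap fun k : ℕ => (R k).edges := by
  induction n with
  | zero => simp [chain]
  | succ n ih => simp [chain, ih, List.range_succ]

lemma length_chain (n : ℕ) : (chain a R n).length = ∑ k ∈ Finset.range n, (R k).length := by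
  induction n with
  | zero => simp [chain]
  | succ n ih => simp [chain, ih, Finset.sum_range_succ]

lemma support_cyclicConcat :
    (cyclicConcat a R).support =
      a 0 :: (List.range m).flatMap fun k : ℕ => (R k).support.tail := by
  rw [cyclicConcat, support_copy, support_chain]

lemma edges_cyclicConcat :
    (cyclicConcat a R).edges = (List.range m).flatMap fun k : ℕ => (R k).edges := by
  rw [cyclicConcat, edges_copy, edges_chain]

lemma length_cyclicConcat :
    (cyclicConcat a R).length = ∑ k ∈ Finset.range m, (R k).length := by
  rw [cyclicConcat, length_copy, length_chain]

variable {a R}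

lemma exists_mem_support_of_mem_support_cyclicConcat {x : V}
    (hx : x ∈ (cyclicConcat a R).support) : ∃ i, x ∈ (R i).support := by
  rw [support_cyclicConcat, List.mem_cons, List.mem_flatMap] at hx
  rcases hx with rfl | ⟨k, -, hk⟩
  · exact ⟨0, start_mem_support _⟩
  · exact ⟨k, List.mem_of_mem_tail hk⟩

lemma mem_flatMap_range_natCast [NeZero m] {α : Type*} {f : ZMod m → List α} {i : ZMod m}
    {y : α} (hy : y ∈ f i) : y ∈ (List.range m).flatMap fun k : ℕ => f k :=
  List.mem_flatMap.mpr ⟨i.val, List.mem_range.mpr i.val_lt, by rwa [ZMod.natCast_zmod_val]⟩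

lemma mem_support_cyclicConcat_of_mem_tail [NeZero m] {i : ZMod m} {x : V}
    (hx : x ∈ (R i).support.tail) : x ∈ (cyclicConcat a R).support := by
  rw [support_cyclicConcat]
  exact List.mem_cons_of_mem _ (mem_flatMap_range_natCast (f := fun i => (R i).support.tail) hx)

lemma mem_edges_cyclicConcat [NeZero m] {i : ZMod m} {e : Sym2 V} (he : e ∈ (R i).edges) :
    e ∈ (cyclicConcat a R).edges := by
  rw [edges_cyclicConcat]
  exact mem_flatMap_range_natCast (f := fun i => (R i).edges) he

lemma isCycle_cyclicConcat (hnodup : ∀ i, (R i).support.tail.Nodup)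
    (hdisj : ∀ i j, i ≠ j → (R i).support.tail.Disjoint (R j).support.tail)
    (hlen : 3 ≤ (cyclicConcat a R).length) : (cyclicConcat a R).IsCycle := by
  refine isCycle_of_support_tail_nodup _ hlen ?_
  rw [support_cyclicConcat, List.tail_cons, List.nodup_flatMap]
  refine ⟨fun k _ => hnodup k, (List.pairwise_lt_range (n := m)).imp_of_mem ?_⟩
  intro k l hk hl hkl
  refine hdisj k l fun h => hkl.ne ?_
  simpa [ZMod.val_natCast_of_lt (List.mem_range.mp hk),
    ZMod.val_natCast_of_lt (List.mem_range.mp hl)] using congrArg ZMod.val h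

end CyclicConcat

end SimpleGraph.Walk

namespace BurlingFormal

open SimpleGraph Walk

section Extrema

variable {V : Type} {G : SimpleGraph V} {v : V} {A : V → V → Prop} {c : G.Walk v v} {x : V}

lemma IsHoleExtremum.mem_support (h : IsHoleExtremum A c x) : x ∈ c.support :=
  h.elim (·.1) (·.1)

lemma IsHoleSource.not_isHoleSink (hA : IsOrientation G A) (hc : ¬ c.Nil)
    (hs : IsHoleSource A c x) : ¬ IsHoleSink A c x := by
  intro ht
  obtain ⟨e, he, hxe⟩ := (mem_support_iff_exists_mem_edges_of_not_nil hc).mp hs.1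
  obtain ⟨y, rfl⟩ := Sym2.mem_iff_exists.mp hxe
  exact (hA.2 x y (c.adj_of_mem_edges he)).mp (hs.2 y he) (ht.2 y he)

lemma IsHoleExtremum.of_forall_mem_edges {w : V} {c' : G.Walk w w} (h : IsHoleExtremum A c x)
    (hx : x ∈ c'.support) (hedges : ∀ y, s(x, y) ∈ c'.edges → s(x, y) ∈ c.edges) :
    IsHoleExtremum A c' x :=
  h.imp (fun hs => ⟨hx, fun y hy => hs.2 y (hedges y hy)⟩)
    (fun ht => ⟨hx, fun y hy => ht.2 y (hedges y hy)⟩)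

lemma TwoSourcesTwoSinks.exists_isHoleExtremum_ne (h : TwoSourcesTwoSinks A c)
    (hst : ∀ x, IsHoleSource A c x → ¬ IsHoleSink A c x) (p q : V) :
    ∃ x, IsHoleExtremum A c x ∧ x ≠ p ∧ x ≠ q := by
  obtain ⟨⟨s₁, s₂, hs, hs₁, hs₂, -⟩, ⟨t, -, -, ht, -, -⟩⟩ := h
  by_contra! H
  have hpq : ∀ y, IsHoleExtremum A c y → y = p ∨ y = q := fun y hy => by
    by_cases hyp : y = p
    · exact .inl hyp
    · exact .inr (H y hy hyp)
  rcases hpq s₁ (.inl hs₁) with rfl | rfl <;> rcases hpq s₂ (.inl hs₂) with rfl | rfl <;>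
    rcases hpq t (.inr ht) with rfl | rfl
  all_goals first | exact hs rfl | exact hst _ hs₁ ht | exact hst _ hs₂ ht

lemma TwoSourcesTwoSinks.exists_eq_of_injective {ι : Type*} [Fintype ι]
    (h : TwoSourcesTwoSinks A c) {e : ι → V} (he : Function.Injective e)
    (hι : 4 ≤ Fintype.card ι) (hext : ∀ i, IsHoleExtremum A c (e i))
    (hx : IsHoleExtremum A c x) : ∃ i, e i = x := by
  classical
  obtain ⟨⟨s₁, s₂, -, -, -, hs⟩, ⟨t₁, t₂, -, -, -, ht⟩⟩ := h
  have hF : ∀ y, IsHoleExtremum A c y → y ∈ ({s₁, s₂, t₁, t₂} : Finset V) := by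
    rintro y (hy | hy)
    · rcases hs y hy with rfl | rfl <;> simp
    · rcases ht y hy with rfl | rfl <;> simp
  have himage : Finset.univ.image e = {s₁, s₂, t₁, t₂} := by
    refine Finset.eq_of_subset_of_card_le (fun y hy => ?_) ?_
    · obtain ⟨i, -, rfl⟩ := Finset.mem_image.mp hy
      exact hF _ (hext i)
    · rw [Finset.card_image_of_injective _ he]
      exact Finset.card_le_four.trans hι
  simpa [← himage] using hF x hx

end Extrema

namespace Necklace

variable {V : Type} {G : SimpleGraph V} {m : ℕ} (N : Necklace G m) {i j : ZMod m} {x : V}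

lemma eq_a_or_eq_b_of_mem_B_of_mem_B (hij : i ≠ j) (hi : x ∈ (N.B i).support)
    (hj : x ∈ (N.B j).support) : x = N.a i ∨ x = N.b i := by
  rcases N.bead_disjoint i j hij x hi hj with ⟨-, h, -⟩ | ⟨-, -, h⟩
  exacts [.inr h, .inl h]

lemma eq_a_or_eq_b_of_mem_B_of_mem_P (hi : x ∈ (N.B i).support) (hj : x ∈ (N.P j).support) :
    x = N.a i ∨ x = N.b i := by
  rcases N.path_bead_disjoint j i x hj hi with rfl | rfl
  · by_cases hij : i = j
    · exact .inr (hij ▸ rfl)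
    · exact N.eq_a_or_eq_b_of_mem_B_of_mem_B hij hi (N.b_mem j)
  · by_cases hij : i = j + 1
    · exact .inl (hij ▸ rfl)
    · exact N.eq_a_or_eq_b_of_mem_B_of_mem_B hij hi (N.B (j + 1)).start_mem_support

lemma isHole_B (i : ZMod m) : IsHole G (N.B i) := by
  -- an edge of another bead or of a path meets `B i` only in `{a i, b i}`, which spans no edge
  have hab : ∀ x y, x = N.a i ∨ x = N.b i → y = N.a i ∨ y = N.b i → ¬ G.Adj x y := by
    rintro x y (rfl | rfl) (rfl | rfl) hxy
    exacts [hxy.ne rfl, N.ab_nonadj i hxy, N.ab_nonadj i hxy.symm, hxy.ne rfl]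
  refine ⟨⟨N.B_cycle i, fun x y hx hy hxy => ?_⟩, N.B_len i⟩
  rcases N.cover_edge x y hxy with ⟨j, hj⟩ | ⟨j, hj⟩
  · by_cases hji : j = i
    · exact hji ▸ hj
    · exact hab x y
        (N.eq_a_or_eq_b_of_mem_B_of_mem_B (Ne.symm hji) hx (fst_mem_support_of_mem_edges _ hj))
        (N.eq_a_or_eq_b_of_mem_B_of_mem_B (Ne.symm hji) hy (snd_mem_support_of_mem_edges _ hj))
        hxy |>.elim
  · exact hab x y (N.eq_a_or_eq_b_of_mem_B_of_mem_P hx (fst_mem_support_of_mem_edges _ hj))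
      (N.eq_a_or_eq_b_of_mem_B_of_mem_P hy (snd_mem_support_of_mem_edges _ hj)) hxy |>.elim

lemma mem_edges_B_of_adj (hx : x ∈ (N.B i).support) (ha : x ≠ N.a i) (hb : x ≠ N.b i) {y : V}
    (hxy : G.Adj x y) : s(x, y) ∈ (N.B i).edges := by
  rcases N.cover_edge x y hxy with ⟨j, hj⟩ | ⟨j, hj⟩
  · by_cases hji : j = i
    · exact hji ▸ hj
    · exact ((N.eq_a_or_eq_b_of_mem_B_of_mem_B (Ne.symm hji) hx
        ((N.B j).fst_mem_support_of_mem_edges hj)).elim ha hb).elim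
  · exact ((N.eq_a_or_eq_b_of_mem_B_of_mem_P hx
      ((N.P j).fst_mem_support_of_mem_edges hj)).elim ha hb).elim

lemma eq_of_mem_B_of_mem_B (hi : x ∈ (N.B i).support) (hai : x ≠ N.a i)
    (hj : x ∈ (N.B j).support) (haj : x ≠ N.a j) : i = j := by
  by_contra hij
  rcases N.bead_disjoint i j hij x hi hj with ⟨-, -, h⟩ | ⟨-, -, h⟩
  exacts [haj h, hai h]

lemma eq_b_of_mem_B_of_mem_P (hi : x ∈ (N.B i).support) (hai : x ≠ N.a i)
    (hj : x ∈ (N.P j).support) : x = N.b j := by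
  rcases N.path_bead_disjoint j i x hj hi with hx | hx
  · exact hx
  by_cases hji : j + 1 = i
  · exact (hai (hji ▸ hx)).elim
  have hx' : x ∈ (N.B (j + 1)).support := by rw [hx]; exact (N.B _).start_mem_support
  rcases N.bead_disjoint (j + 1) i hji x hx' hi with ⟨-, -, h⟩ | ⟨hc, h, -⟩
  · exact (hai h).elim
  · rwa [add_right_cancel hc]

lemma eq_of_mem_P_of_mem_P (hi : x ∈ (N.P i).support) (hbi : x ≠ N.b i)
    (hj : x ∈ (N.P j).support) (hbj : x ≠ N.b j) : i = j := by
  by_contra hij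
  obtain ⟨hxi, hxj⟩ := N.path_disjoint i j hij x hi hj
  have hai := hxi.resolve_left hbi
  have haj := hxj.resolve_left hbj
  have hij' : i + 1 ≠ j + 1 := fun h => hij (add_right_cancel h)
  rcases N.bead_disjoint (i + 1) (j + 1) hij' x (by rw [hai]; exact (N.B _).start_mem_support)
    (by rw [haj]; exact (N.B _).start_mem_support) with ⟨-, h, -⟩ | ⟨-, h, -⟩
  exacts [N.ab_ne _ (hai.symm.trans h), N.ab_ne _ (haj.symm.trans h)]

lemma eq_of_mem_arc_of_mem_arc
    (hi : (x ∈ (N.B i).support ∧ x ≠ N.a i) ∨ (x ∈ (N.P i).support ∧ x ≠ N.b i))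
    (hj : (x ∈ (N.B j).support ∧ x ≠ N.a j) ∨ (x ∈ (N.P j).support ∧ x ≠ N.b j)) : i = j := by
  rcases hi with ⟨hBi, hai⟩ | ⟨hPi, hbi⟩ <;> rcases hj with ⟨hBj, haj⟩ | ⟨hPj, hbj⟩
  · exact N.eq_of_mem_B_of_mem_B hBi hai hBj haj
  · exact (hbj (N.eq_b_of_mem_B_of_mem_P hBi hai hPj)).elim
  · exact (hbi (N.eq_b_of_mem_B_of_mem_P hBj haj hPi)).elim
  · exact N.eq_of_mem_P_of_mem_P hPi hbi hPj hbj

section Halves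

variable {Q : ∀ i, G.Walk (N.a i) (N.b i)}

lemma mem_arc_of_mem_support_tail (hQ : (Q i).IsPath)
    (hQB : ∀ y ∈ (Q i).support, y ∈ (N.B i).support)
    (hx : x ∈ ((Q i).append (N.P i)).support.tail) :
    (x ∈ (N.B i).support ∧ x ≠ N.a i) ∨ (x ∈ (N.P i).support ∧ x ≠ N.b i) := by
  rw [mem_tail_support_append_iff] at hx
  exact hx.imp (fun h => ⟨hQB x (List.mem_of_mem_tail h), hQ.ne_of_mem_support_tail h⟩)
    (fun h => ⟨List.mem_of_mem_tail h, (N.P_path i).ne_of_mem_support_tail h⟩)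

lemma two_mul_le_length_cyclicConcat :
    2 * m ≤ (cyclicConcat N.a fun i => (Q i).append (N.P i)).length := by
  rw [length_cyclicConcat]
  calc 2 * m = ∑ _k ∈ Finset.range m, 2 := by simp [mul_comm]
    _ ≤ _ := Finset.sum_le_sum fun k _ => by
      rw [length_append]
      have := two_le_length_of_not_adj (Q k) (N.ab_ne k) (N.ab_nonadj k)
      omega

lemma isCycle_cyclicConcat (hm : 2 ≤ m) (hQ : ∀ i, (Q i).IsPath)
    (hQB : ∀ i, ∀ y ∈ (Q i).support, y ∈ (N.B i).support) :
    (cyclicConcat N.a fun i => (Q i).append (N.P i)).IsCycle := by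
  refine Walk.isCycle_cyclicConcat (fun i => ?_) (fun i j hij => List.disjoint_left.mpr ?_) ?_
  · rw [tail_support_append, List.nodup_append]
    refine ⟨(hQ i).support_nodup.tail, (N.P_path i).support_nodup.tail, ?_⟩
    rintro x hxQ y hyP rfl
    exact (N.P_path i).ne_of_mem_support_tail hyP
      (N.eq_b_of_mem_B_of_mem_P (hQB i x (List.mem_of_mem_tail hxQ))
        ((hQ i).ne_of_mem_support_tail hxQ) (List.mem_of_mem_tail hyP))
  · exact fun _ hxi hxj => hij (N.eq_of_mem_arc_of_mem_arc
      (N.mem_arc_of_mem_support_tail (hQ i) (hQB i) hxi)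
      (N.mem_arc_of_mem_support_tail (hQ j) (hQB j) hxj))
  · linarith [N.two_mul_le_length_cyclicConcat (Q := Q)]

lemma mem_support_of_mem_support_cyclicConcat
    (hQB : ∀ i, ∀ y ∈ (Q i).support, y ∈ (N.B i).support)
    (hx : x ∈ (cyclicConcat N.a fun i => (Q i).append (N.P i)).support)
    (hxB : x ∈ (N.B i).support) : x ∈ (Q i).support := by
  have hab : x = N.a i ∨ x = N.b i → x ∈ (Q i).support := by
    rintro (rfl | rfl)
    exacts [(Q i).start_mem_support, (Q i).end_mem_support]
  obtain ⟨j, hj⟩ := exists_mem_support_of_mem_support_cyclicConcat hx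
  rcases (mem_support_append_iff _ _).mp hj with hj | hj
  · by_cases hji : j = i
    · exact hji ▸ hj
    · exact hab (N.eq_a_or_eq_b_of_mem_B_of_mem_B (Ne.symm hji) hxB (hQB j x hj))
  · exact hab (N.eq_a_or_eq_b_of_mem_B_of_mem_P hxB hj)

lemma isHole_cyclicConcat (hm : 2 ≤ m) (hQ : ∀ i, (Q i).IsPath)
    (hQB : ∀ i, ∀ y ∈ (Q i).support, y ∈ (N.B i).support)
    (hQind : ∀ i, ∀ y z, y ∈ (Q i).support → z ∈ (Q i).support → s(y, z) ∈ (N.B i).edges →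
      s(y, z) ∈ (Q i).edges) :
    IsHole G (cyclicConcat N.a fun i => (Q i).append (N.P i)) := by
  have : NeZero m := ⟨by omega⟩
  refine ⟨⟨N.isCycle_cyclicConcat hm hQ hQB, fun x y hx hy hxy => ?_⟩,
    by linarith [N.two_mul_le_length_cyclicConcat (Q := Q)]⟩
  rcases N.cover_edge x y hxy with ⟨i, hi⟩ | ⟨i, hi⟩
  · have hQi := hQind i x y
      (N.mem_support_of_mem_support_cyclicConcat hQB hx (fst_mem_support_of_mem_edges _ hi))
      (N.mem_support_of_mem_support_cyclicConcat hQB hy (snd_mem_support_of_mem_edges _ hi)) hi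
    exact mem_edges_cyclicConcat (i := i) (by rw [edges_append]; exact List.mem_append_left _ hQi)
  · exact mem_edges_cyclicConcat (i := i) (by rw [edges_append]; exact List.mem_append_right _ hi)

end Halves

lemma exists_isHole_forall_mem_support (hm : 2 ≤ m) (e : ZMod m → V)
    (he : ∀ i, e i ∈ (N.B i).support) (hea : ∀ i, e i ≠ N.a i) :
    ∃ (v : V) (C : G.Walk v v), IsHole G C ∧ ∀ i, e i ∈ C.support := by
  classical
  have : NeZero m := ⟨by omega⟩
  choose Q hQ heQ hQB hQind using fun i =>
    (N.B_cycle i).exists_isPath_of_mem_support (N.b_mem i) (N.ab_ne i) (N.ab_nonadj i) (he i)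
  refine ⟨_, _, N.isHole_cyclicConcat hm hQ hQB hQind,
    fun i => mem_support_cyclicConcat_of_mem_tail (i := i) ?_⟩
  rw [mem_tail_support_append_iff]
  exact .inl (((Q i).mem_support_iff.mp (heQ i)).resolve_left (hea i))

end Necklace

/-- an `m`-necklace with `m ≥ 4` admits no orientation in which every hole has
exactly two sources and two sinks with three of these four extrema consecutive. -/
theorem necklace_orientation_contradiction (V : Type) (G : SimpleGraph V) (m : ℕ)
    (N : Necklace G m) (hm : 4 ≤ m) (A : V → V → Prop) (hA : IsOrientation G A)
    (hholes : ∀ (v : V) (c : G.Walk v v), IsHole G c → TwoSourcesTwoSinks A c ∧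
      ∃ x y z, x ≠ y ∧ y ≠ z ∧ x ≠ z ∧ IsHoleExtremum A c x ∧ IsHoleExtremum A c y ∧
        IsHoleExtremum A c z ∧ s(x, y) ∈ c.edges ∧ s(y, z) ∈ c.edges) :
    False := by
  have : NeZero m := ⟨by omega⟩
  choose e he hea heb using fun i => (hholes _ _ (N.isHole_B i)).1.exists_isHoleExtremum_ne
    (fun _ hs => hs.not_isHoleSink hA (N.B_cycle i).not_nil) (N.a i) (N.b i)
  have hindex : ∀ i j, e i ∈ (N.B j).support → i = j := fun i j hj => by
    by_contra hij
    exact (N.eq_a_or_eq_b_of_mem_B_of_mem_B hij (he i).mem_support hj).elim (hea i) (heb i)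
  have hedges : ∀ i y, G.Adj (e i) y → s(e i, y) ∈ (N.B i).edges := fun i _ =>
    N.mem_edges_B_of_adj (he i).mem_support (hea i) (heb i)
  obtain ⟨v, C, hC, heC⟩ :=
    N.exists_isHole_forall_mem_support (by omega) e (fun i => (he i).mem_support) hea
  have heC_ext : ∀ i, IsHoleExtremum A C (e i) := fun i =>
    (he i).of_forall_mem_edges (heC i) fun y hy => hedges i y (C.adj_of_mem_edges hy)
  have he_inj : Function.Injective e := fun i j h => hindex i j (h ▸ (he j).mem_support)
  obtain ⟨hC₂, x, y, _, hxy, -, -, hx, hy, -, hxyC, -⟩ := hholes v C hC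
  obtain ⟨i, rfl⟩ := hC₂.exists_eq_of_injective he_inj (by simpa using hm) heC_ext hx
  obtain ⟨j, rfl⟩ := hC₂.exists_eq_of_injective he_inj (by simpa using hm) heC_ext hy
  have hji := hindex j i
    ((N.B i).snd_mem_support_of_mem_edges (hedges i _ (C.adj_of_mem_edges hxyC)))
  exact hxy (congrArg e hji.symm)

end BurlingFormal
end

section
/- Let G be a type 4 subdivision of K_4 (exactly four of the six edges properly subdivided, the two non-subdivided edges sharing an endpoint x, and the subdivision satisfying the Burling condition). Then x is the unique vertex that is the center of a star cutset in G. -/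
namespace SimpleGraph.Walk

variable {V : Type} {G : SimpleGraph V}

lemma reachable_induce_of_support_subset {s : Set V} {u t : V} (p : G.Walk u t)
    (hp : ∀ z ∈ p.support, z ∈ s) :
    (G.induce s).Reachable ⟨u, hp u p.start_mem_support⟩ ⟨t, hp t p.end_mem_support⟩ :=
  (p.connected_induce_support.preconnected ⟨u, p.start_mem_support⟩
    ⟨t, p.end_mem_support⟩).map (induceHomOfLE G hp).toHom

lemma support_tail_dropUntil_subset [DecidableEq V] {u t w : V} (p : G.Walk u t)
    (h : w ∈ p.support) : (p.dropUntil w h).support.tail ⊆ p.support.tail := by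
  obtain ⟨l, hl⟩ := p.support_dropUntil_suffix_support h
  rw [← hl]
  cases l with
  | nil => exact List.Subset.refl _
  | cons a l => exact fun z hz => List.mem_append_right _ (List.mem_of_mem_tail hz)

lemma support_tail_append {u v w : V} (p : G.Walk u v) (q : G.Walk v w) :
    (p.append q).support.tail = p.support.tail ++ q.support.tail := by
  rw [support_append, List.tail_append_of_ne_nil p.support_ne_nil]

lemma exists_getVert_of_mem_support_tail {u v z : V} {p : G.Walk u v} (h : z ∈ p.support.tail) :
    ∃ k, 0 < k ∧ k ≤ p.length ∧ p.getVert k = z := by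
  obtain ⟨k, hk, rfl⟩ := List.getElem_of_mem h
  refine ⟨k + 1, k.succ_pos, ?_, ?_⟩
  · simp at hk; omega
  · rw [getVert_eq_support_getElem _ (by simp at hk; omega)]
    simp

lemma IsPath.getVert_ne_and_not_adj {a b : V} {P : G.Walk a b} (hP : P.IsPath) {i j : ℕ}
    (hi : i ≠ 0) (hij : i + 1 < j) (hj : j ≤ P.length)
    (hN : ∀ u, G.Adj (P.getVert i) u → s(P.getVert i, u) ∈ P.edges) :
    P.getVert j ≠ P.getVert i ∧ ¬ G.Adj (P.getVert i) (P.getVert j) := by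
  have hinj : ∀ k ≤ P.length, P.getVert j = P.getVert k → j = k := fun k hk h =>
    hP.getVert_injOn (by simpa using hj) (by simpa using hk) h
  refine ⟨fun h => absurd (hinj i (by omega) h) (by omega), fun h => ?_⟩
  have hadj : P.toSubgraph.Adj (P.getVert i) (P.getVert j) :=
    adj_toSubgraph_iff_mem_edges.mpr (hN _ h)
  rw [← Subgraph.mem_neighborSet, hP.neighborSet_toSubgraph_internal hi (by omega)] at hadj
  rcases hadj with h' | h'
  · exact absurd (hinj _ (by omega) h') (by omega)
  · exact absurd (hinj _ (by omega) h') (by omega)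

lemma mem_support_tail_of_ne {a b u : V} {P : G.Walk a b} (h : u ∈ P.support) (hu : u ≠ a) :
    u ∈ P.tail.support := by
  cases P <;> simp_all

lemma IsPath.mem_support_tail_iff {a b z : V} {P : G.Walk a b} (hP : P.IsPath) :
    z ∈ P.support.tail ↔ z ∈ P.support ∧ z ≠ a := by
  have := hP.support_nodup
  rw [← cons_tail_support] at this ⊢
  grind [List.nodup_cons]

lemma IsPath.mem_support_tail_tail_iff {a b z : V} {P : G.Walk a b} (hP : P.IsPath) :
    z ∈ P.tail.support.tail ↔ z ∈ P.support ∧ z ≠ a ∧ z ≠ P.snd := by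
  by_cases hn : P.Nil
  · cases hn; simp
  · rw [hP.tail.mem_support_tail_iff, support_tail_of_not_nil _ hn, hP.mem_support_tail_iff,
      and_assoc]

lemma IsPath.snd_eq_of_mem_edges {a b t : V} {P : G.Walk a b} (hP : P.IsPath)
    (h : s(a, t) ∈ P.edges) : t = P.snd :=
  (hP.snd_of_toSubgraph_adj (adj_toSubgraph_iff_mem_edges.mpr h)).symm

lemma IsPath.snd_mem_support_and_ne {a b : V} {P : G.Walk a b} (hP : P.IsPath)
    (h : 2 ≤ P.length) : P.snd ∈ P.support ∧ P.snd ≠ a ∧ P.snd ≠ b := by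
  refine ⟨P.getVert_mem_support 1, ?_, ?_⟩
  · rw [Ne, hP.getVert_eq_start_iff (by omega)]; omega
  · rw [Ne, hP.getVert_eq_end_iff (by omega)]; omega

lemma IsPath.mem_support_reverse_tail_iff {a b z : V} {P : G.Walk a b} (hP : P.IsPath) :
    z ∈ P.reverse.support.tail ↔ z ∈ P.support ∧ z ≠ b := by
  rw [hP.reverse.mem_support_tail_iff, support_reverse, List.mem_reverse]

lemma IsPath.mem_support_reverse_tail_tail_iff {a b z : V} {P : G.Walk a b} (hP : P.IsPath) :
    z ∈ P.reverse.tail.support.tail ↔ z ∈ P.support ∧ z ≠ b ∧ z ≠ P.penultimate := by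
  rw [hP.reverse.mem_support_tail_tail_iff, support_reverse, List.mem_reverse, snd_reverse]

lemma IsPath.penultimate_mem_support_and_ne {a b : V} {P : G.Walk a b} (hP : P.IsPath)
    (h : 2 ≤ P.length) : P.penultimate ∈ P.support ∧ P.penultimate ≠ b ∧ P.penultimate ≠ a := by
  simpa using hP.reverse.snd_mem_support_and_ne (by simpa using h)

lemma exists_getVert_eq_of_mem_support {a b v : V} {P : G.Walk a b} (h : v ∈ P.support)
    (ha : v ≠ a) (hb : v ≠ b) : ∃ i, i ≠ 0 ∧ i < P.length ∧ P.getVert i = v := by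
  obtain ⟨i, rfl, hi⟩ := mem_support_iff_exists_getVert.mp h
  refine ⟨i, fun h0 => ha (by simp [h0]), lt_of_le_of_ne hi fun hl => hb (by simp [hl]), rfl⟩

end SimpleGraph.Walk

namespace BurlingFormal

open SimpleGraph Walk

section StarCutset

variable {V : Type} {G : SimpleGraph V}

def TailAvoidsClosedNbhd (G : SimpleGraph V) (v : V) {a t : V} (p : G.Walk a t) : Prop :=
  ∀ z ∈ p.support.tail, z ≠ v ∧ ¬ G.Adj v z

lemma TailAvoidsClosedNbhd.append {v a b t : V} {p : G.Walk a b} {q : G.Walk b t}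
    (hp : TailAvoidsClosedNbhd G v p) (hq : TailAvoidsClosedNbhd G v q) :
    TailAvoidsClosedNbhd G v (p.append q) := by
  intro z hz
  rw [support_tail_append, List.mem_append] at hz
  exact hz.elim (hp z) (hq z)

lemma tailAvoidsClosedNbhd_of_notMem {v a b s t : V} {P : G.Walk a b} {Q : G.Walk s t}
    (hv : v ∈ P.support) (hN : ∀ u, G.Adj v u → s(v, u) ∈ P.edges)
    (hQ : ∀ z ∈ Q.support.tail, z ∉ P.support) : TailAvoidsClosedNbhd G v Q :=
  fun z hz => ⟨fun h => hQ z hz (h ▸ hv),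
    fun h => hQ z hz (P.snd_mem_support_of_mem_edges (hN z h))⟩

theorem not_hasStarCutsetAt_of_forall_mem_walk {v t : V}
    (h : ∀ u ≠ v, ∃ (a : V) (p : G.Walk a t), u ∈ p.support ∧ TailAvoidsClosedNbhd G v p) :
    ¬ HasStarCutsetAt G v := by
  classical
  rintro ⟨S, hvS, hSN, hS⟩
  suffices hreach : ∀ u (hu : u ∈ Sᶜ), ∃ ht : t ∈ Sᶜ, (G.induce Sᶜ).Reachable ⟨u, hu⟩ ⟨t, ht⟩ by
    refine hS fun a b => ?_
    obtain ⟨_, ha⟩ := hreach a.1 a.2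
    obtain ⟨_, hb⟩ := hreach b.1 b.2
    exact ha.trans hb.symm
  intro u hu
  obtain ⟨a, p, hup, hp⟩ := h u fun huv => hu (huv ▸ hvS)
  have hsupp : ∀ z ∈ (p.dropUntil u hup).support, z ∈ Sᶜ := by
    intro z hz hzS
    rw [← cons_tail_support] at hz
    rcases List.mem_cons.mp hz with rfl | hz
    · exact hu hzS
    · obtain ⟨hzv, hvz⟩ := hp z (p.support_tail_dropUntil_subset hup hz)
      exact (hSN z hzS).elim hzv hvz
  exact ⟨_, (p.dropUntil u hup).reachable_induce_of_support_subset hsupp⟩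

lemma not_preconnected_induce_compl {S C : Set V} {u w : V} (hu : u ∈ C) (huS : u ∉ S)
    (hw : w ∉ C) (hwS : w ∉ S) (hC : ∀ a ∈ C, ∀ b, G.Adj a b → b ∈ C ∨ b ∈ S) :
    ¬ (G.induce Sᶜ).Preconnected := by
  intro h
  obtain ⟨p⟩ := h ⟨u, huS⟩ ⟨w, hwS⟩
  obtain ⟨d, -, hd, hd'⟩ := p.exists_boundary_dart {a | a.1 ∈ C} hu hw
  exact (hC _ hd _ d.adj).elim hd' d.snd.2

lemma exists_walk_tailAvoidsClosedNbhd_of_lt {a b t : V} {P : G.Walk a b}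
    (hP : P.IsPath) {i j : ℕ} (hi : i ≠ 0) (hij : i < j) (hj : j ≤ P.length)
    (hN : ∀ u, G.Adj (P.getVert i) u → s(P.getVert i, u) ∈ P.edges)
    {Q : G.Walk b t} (hQ : ∀ z ∈ Q.support.tail, z ∉ P.support) :
    ∃ (s : V) (W : G.Walk s t), P.getVert j ∈ W.support ∧
      TailAvoidsClosedNbhd G (P.getVert i) W := by
  refine ⟨_, (P.drop (i + 1)).append Q, ?_, ?_⟩
  · have h : (P.drop (i + 1)).getVert (j - (i + 1)) = P.getVert j := by
      rw [drop_getVert]; congr 1; omega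
    exact (mem_support_append_iff _ _).mpr (Or.inl (h ▸ getVert_mem_support _ _))
  · refine TailAvoidsClosedNbhd.append (fun z hz => ?_)
      (tailAvoidsClosedNbhd_of_notMem (getVert_mem_support _ _) hN hQ)
    obtain ⟨k, hk, hkl, rfl⟩ := exists_getVert_of_mem_support_tail hz
    rw [drop_length] at hkl
    rw [drop_getVert]
    exact hP.getVert_ne_and_not_adj hi (by omega) (by omega) hN

theorem not_hasStarCutsetAt_getVert {a b t : V} {P : G.Walk a b} (hP : P.IsPath) {i : ℕ}
    (hi : i ≠ 0) (hil : i < P.length)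
    (hN : ∀ u, G.Adj (P.getVert i) u → s(P.getVert i, u) ∈ P.edges)
    {Qa : G.Walk a t} {Qb : G.Walk b t}
    (hQa : ∀ z ∈ Qa.support.tail, z ∉ P.support) (hQb : ∀ z ∈ Qb.support.tail, z ∉ P.support)
    (hcover : ∀ u ∉ P.support, ∃ (s : V) (Q : G.Walk s t), u ∈ Q.support ∧
      ∀ z ∈ Q.support.tail, z ∉ P.support) :
    ¬ HasStarCutsetAt G (P.getVert i) := by
  refine not_hasStarCutsetAt_of_forall_mem_walk (t := t) fun u hu => ?_
  by_cases huP : u ∈ P.support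
  · obtain ⟨j, rfl, hj⟩ := mem_support_iff_exists_getVert.mp huP
    rcases lt_or_gt_of_ne (fun hji : j = i => hu (hji ▸ rfl)) with hji | hij
    · -- the vertices before `v` are those after `v` on the reversed path
      have hrev : ∀ k ≤ P.length, P.reverse.getVert (P.length - k) = P.getVert k := fun k hk => by
        rw [getVert_reverse]; congr 1; omega
      have hN' : ∀ u, G.Adj (P.reverse.getVert (P.length - i)) u →
          s(P.reverse.getVert (P.length - i), u) ∈ P.reverse.edges := by
        rw [hrev i hil.le, edges_reverse]
        exact fun u h => List.mem_reverse.mpr (hN u h)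
      have hQa' : ∀ z ∈ Qa.support.tail, z ∉ P.reverse.support := by
        simpa only [support_reverse, List.mem_reverse] using hQa
      have := exists_walk_tailAvoidsClosedNbhd_of_lt hP.reverse (i := P.length - i)
        (j := P.length - j) (by omega) (by omega)
        (by rw [length_reverse]; omega) hN' hQa'
      rwa [hrev i hil.le, hrev j hj] at this
    · exact exists_walk_tailAvoidsClosedNbhd_of_lt hP hi hij hj hN hQb
  · obtain ⟨s, Q, huQ, hQ⟩ := hcover u huP
    exact ⟨s, Q, huQ, tailAvoidsClosedNbhd_of_notMem (getVert_mem_support _ _) hN hQ⟩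

end StarCutset

namespace Type4K4Core

variable {V : Type} {G : SimpleGraph V} (c : Type4K4Core G)

def swap : Type4K4Core G where
  x := c.x
  y := c.z
  z := c.y
  w := c.w
  ne_xy := c.ne_xz
  ne_xz := c.ne_xy
  ne_xw := c.ne_xw
  ne_yz := c.ne_yz.symm
  ne_yw := c.ne_zw
  ne_zw := c.ne_yw
  adj_xy := c.adj_xz
  adj_xz := c.adj_xy
  Pxw := c.Pxw
  Pyz := c.Pyz.reverse
  Pyw := c.Pzw
  Pzw := c.Pyw
  Pxw_path := c.Pxw_path
  Pyz_path := c.Pyz_path.reverse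
  Pyw_path := c.Pzw_path
  Pzw_path := c.Pyw_path
  Pxw_len := c.Pxw_len
  Pyz_len := by rw [length_reverse]; exact c.Pyz_len
  Pyw_len := c.Pzw_len
  Pzw_len := c.Pyw_len
  d₁ v h h' := c.d₁ v h (by simpa using h')
  d₂ := c.d₃
  d₃ := c.d₂
  d₄ v h h' := c.d₅ v (by simpa using h) h'
  d₅ v h h' := c.d₄ v (by simpa using h) h'
  d₆ v h h' := c.d₆ v h' h

lemma x_notMem_Pyz : c.x ∉ c.Pyz.support := fun h => c.d₁ c.x c.Pxw.start_mem_support h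
lemma x_notMem_Pyw : c.x ∉ c.Pyw.support := fun h => c.ne_xw (c.d₂ c.x c.Pxw.start_mem_support h)
lemma x_notMem_Pzw : c.x ∉ c.Pzw.support := fun h => c.ne_xw (c.d₃ c.x c.Pxw.start_mem_support h)
lemma y_notMem_Pxw : c.y ∉ c.Pxw.support := fun h => c.ne_yw (c.d₂ c.y h c.Pyw.start_mem_support)
lemma y_notMem_Pzw : c.y ∉ c.Pzw.support := fun h => c.ne_yw (c.d₆ c.y c.Pyw.start_mem_support h)
lemma z_notMem_Pxw : c.z ∉ c.Pxw.support := fun h => c.ne_zw (c.d₃ c.z h c.Pzw.start_mem_support)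
lemma z_notMem_Pyw : c.z ∉ c.Pyw.support := fun h => c.ne_zw (c.d₆ c.z h c.Pzw.start_mem_support)
lemma w_notMem_Pyz : c.w ∉ c.Pyz.support := fun h => c.d₁ c.w c.Pxw.end_mem_support h

variable {c}

lemma Spanning.swap (hc : c.Spanning) : c.swap.Spanning := by
  refine ⟨fun v => ?_, fun u v h => ?_⟩
  · have := hc.1 v
    simp only [supp, Set.mem_ofPred_eq] at this ⊢
    simp only [Type4K4Core.swap, support_reverse, List.mem_reverse]
    tauto
  · have := hc.2 u v h
    simp only [edges, Set.mem_ofPred_eq] at this ⊢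
    simp only [Type4K4Core.swap, edges_reverse, List.mem_reverse]
    tauto

lemma mem_edges_of_adj (hc : c.Spanning) {u t : V} (h : G.Adj u t) :
    (u ∈ c.Pxw.support ∧ s(u, t) ∈ c.Pxw.edges) ∨ (u ∈ c.Pyz.support ∧ s(u, t) ∈ c.Pyz.edges) ∨
      (u ∈ c.Pyw.support ∧ s(u, t) ∈ c.Pyw.edges) ∨ (u ∈ c.Pzw.support ∧ s(u, t) ∈ c.Pzw.edges) ∨
      (u = c.x ∧ t = c.y) ∨ (u = c.y ∧ t = c.x) ∨ (u = c.x ∧ t = c.z) ∨ (u = c.z ∧ t = c.x) := by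
  rcases hc.2 _ _ h with h | h | h | h | h | h <;>
    grind [fst_mem_support_of_mem_edges]

lemma adj_y_cases (hc : c.Spanning) {t : V} (h : G.Adj c.y t) :
    t = c.x ∨ t = c.Pyz.snd ∨ t = c.Pyw.snd := by
  rcases mem_edges_of_adj hc h with h | h | h | h | h | h | h | h
  · exact absurd h.1 c.y_notMem_Pxw
  · exact Or.inr (Or.inl (c.Pyz_path.snd_eq_of_mem_edges h.2))
  · exact Or.inr (Or.inr (c.Pyw_path.snd_eq_of_mem_edges h.2))
  all_goals grind [c.y_notMem_Pzw, c.ne_xy, c.ne_yz]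

lemma adj_w_cases (hc : c.Spanning) {t : V} (h : G.Adj c.w t) :
    t = c.Pxw.penultimate ∨ t = c.Pyw.penultimate ∨ t = c.Pzw.penultimate := by
  have hrev : ∀ {a : V} {P : G.Walk a c.w}, P.IsPath → s(c.w, t) ∈ P.edges → t = P.penultimate :=
    fun {_ P} hP h => snd_reverse P ▸
      hP.reverse.snd_eq_of_mem_edges (by rwa [edges_reverse, List.mem_reverse])
  rcases mem_edges_of_adj hc h with h | h | h | h | h | h | h | h
  · exact Or.inl (hrev c.Pxw_path h.2)
  · exact absurd h.1 c.w_notMem_Pyz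
  · exact Or.inr (Or.inl (hrev c.Pyw_path h.2))
  · exact Or.inr (Or.inr (hrev c.Pzw_path h.2))
  all_goals grind [c.ne_xw, c.ne_yw, c.ne_zw]

lemma mem_edges_Pxw_of_adj (hc : c.Spanning) {u t : V} (hu : u ∈ c.Pxw.support) (hux : u ≠ c.x)
    (huw : u ≠ c.w) (h : G.Adj u t) : s(u, t) ∈ c.Pxw.edges := by
  rcases mem_edges_of_adj hc h with h | h | h | h | h | h | h | h <;>
    grind [c.d₁, c.d₂, c.d₃, c.y_notMem_Pxw, c.z_notMem_Pxw]

lemma mem_edges_Pyz_of_adj (hc : c.Spanning) {u t : V} (hu : u ∈ c.Pyz.support) (huy : u ≠ c.y)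
    (huz : u ≠ c.z) (h : G.Adj u t) : s(u, t) ∈ c.Pyz.edges := by
  rcases mem_edges_of_adj hc h with h | h | h | h | h | h | h | h <;>
    grind [c.d₁, c.d₄, c.d₅, c.x_notMem_Pyz]

lemma mem_edges_Pyw_of_adj (hc : c.Spanning) {u t : V} (hu : u ∈ c.Pyw.support) (huy : u ≠ c.y)
    (huw : u ≠ c.w) (h : G.Adj u t) : s(u, t) ∈ c.Pyw.edges := by
  rcases mem_edges_of_adj hc h with h | h | h | h | h | h | h | h <;>
    grind [c.d₂, c.d₄, c.d₆, c.x_notMem_Pyw, c.z_notMem_Pyw]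

theorem hasStarCutsetAt_x (hc : c.Spanning) : HasStarCutsetAt G c.x := by
  obtain ⟨hr, hry, hrz⟩ := c.Pyz_path.snd_mem_support_and_ne c.Pyz_len
  refine ⟨{c.x, c.y, c.z}, by simp, ?_, ?_⟩
  · rintro u (rfl | rfl | rfl)
    exacts [Or.inl rfl, Or.inr c.adj_xy, Or.inr c.adj_xz]
  · refine not_preconnected_induce_compl (C := {u | u ∈ c.Pyz.support ∧ u ≠ c.y ∧ u ≠ c.z})
      (u := c.Pyz.snd) (w := c.w) ⟨hr, hry, hrz⟩ ?_ ?_ ?_ ?_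
    · grind [c.x_notMem_Pyz]
    · grind [c.w_notMem_Pyz]
    · grind [c.ne_xw, c.ne_yw, c.ne_zw]
    · rintro a ⟨ha, hay, haz⟩ b hab
      have := c.Pyz.snd_mem_support_of_mem_edges (mem_edges_Pyz_of_adj hc ha hay haz hab)
      grind

theorem not_hasStarCutsetAt_y (hc : c.Spanning) : ¬ HasStarCutsetAt G c.y := by
  have hN : ∀ z, z ≠ c.y → z ≠ c.x → z ≠ c.Pyz.snd → z ≠ c.Pyw.snd → z ≠ c.y ∧ ¬ G.Adj c.y z :=
    fun z h₁ h₂ h₃ h₄ => ⟨h₁, fun h => by grind [adj_y_cases hc h]⟩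
  have h₁ := c.Pyz_path.snd_mem_support_and_ne c.Pyz_len
  have h₂ := c.Pyw_path.snd_mem_support_and_ne c.Pyw_len
  have hxw : TailAvoidsClosedNbhd G c.y c.Pxw := fun z hz => by
    rw [c.Pxw_path.mem_support_tail_iff] at hz
    exact hN z (by grind [c.y_notMem_Pxw]) hz.2 (by grind [c.d₁]) (by grind [c.d₂])
  have hyz : TailAvoidsClosedNbhd G c.y c.Pyz.tail := fun z hz => by
    rw [c.Pyz_path.mem_support_tail_tail_iff] at hz
    exact hN z hz.2.1 (by grind [c.x_notMem_Pyz]) hz.2.2 (by grind [c.d₄])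
  have hzw : TailAvoidsClosedNbhd G c.y c.Pzw := fun z hz => by
    rw [c.Pzw_path.mem_support_tail_iff] at hz
    exact hN z (by grind [c.y_notMem_Pzw]) (by grind [c.x_notMem_Pzw]) (by grind [c.d₅])
      (by grind [c.d₆])
  have hyw : TailAvoidsClosedNbhd G c.y c.Pyw.tail := fun z hz => by
    rw [c.Pyw_path.mem_support_tail_tail_iff] at hz
    exact hN z hz.2.1 (by grind [c.x_notMem_Pyw]) (by grind [c.d₄]) hz.2.2
  refine not_hasStarCutsetAt_of_forall_mem_walk (t := c.w) fun u hu => ?_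
  rcases hc.1 u with h | h | h | h
  · exact ⟨_, _, h, hxw⟩
  · exact ⟨_, _, (mem_support_append_iff _ _).mpr (Or.inl (mem_support_tail_of_ne h hu)),
      hyz.append hzw⟩
  · exact ⟨_, _, mem_support_tail_of_ne h hu, hyw⟩
  · exact ⟨_, _, (mem_support_append_iff _ _).mpr (Or.inr h), hyz.append hzw⟩

theorem not_hasStarCutsetAt_w (hc : c.Spanning) : ¬ HasStarCutsetAt G c.w := by
  have hN : ∀ z, z ≠ c.w → z ≠ c.Pxw.penultimate → z ≠ c.Pyw.penultimate →
      z ≠ c.Pzw.penultimate → z ≠ c.w ∧ ¬ G.Adj c.w z :=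
    fun z h₁ h₂ h₃ h₄ => ⟨h₁, fun h => by grind [adj_w_cases hc h]⟩
  have h₁ := c.Pxw_path.penultimate_mem_support_and_ne c.Pxw_len
  have h₂ := c.Pyw_path.penultimate_mem_support_and_ne c.Pyw_len
  have h₃ := c.Pzw_path.penultimate_mem_support_and_ne c.Pzw_len
  have hxw : TailAvoidsClosedNbhd G c.w c.Pxw.reverse.tail := fun z hz => by
    rw [c.Pxw_path.mem_support_reverse_tail_tail_iff] at hz
    exact hN z hz.2.1 hz.2.2 (by grind [c.d₂]) (by grind [c.d₃])
  have hxy : TailAvoidsClosedNbhd G c.w (cons c.adj_xy nil) := fun z hz => by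
    simp only [support_cons, support_nil, List.tail_cons, List.mem_singleton] at hz
    exact hN z (hz ▸ c.ne_yw) (by grind [c.y_notMem_Pxw]) (by grind) (by grind [c.y_notMem_Pzw])
  have hyw : TailAvoidsClosedNbhd G c.w c.Pyw.reverse.tail := fun z hz => by
    rw [c.Pyw_path.mem_support_reverse_tail_tail_iff] at hz
    exact hN z hz.2.1 (by grind [c.d₂]) hz.2.2 (by grind [c.d₆])
  have hzw : TailAvoidsClosedNbhd G c.w c.Pzw.reverse.tail := fun z hz => by
    rw [c.Pzw_path.mem_support_reverse_tail_tail_iff] at hz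
    exact hN z hz.2.1 (by grind [c.d₃]) (by grind [c.d₆]) hz.2.2
  have hyz : TailAvoidsClosedNbhd G c.w c.Pyz.reverse := fun z hz => by
    rw [c.Pyz_path.mem_support_reverse_tail_iff] at hz
    exact hN z (by grind [c.w_notMem_Pyz]) (by grind [c.d₁]) (by grind [c.d₄]) (by grind [c.d₅])
  refine not_hasStarCutsetAt_of_forall_mem_walk (t := c.y) fun u hu => ?_
  rcases hc.1 u with h | h | h | h
  · exact ⟨_, _, (mem_support_append_iff _ _).mpr
      (Or.inl (mem_support_tail_of_ne (by simpa using h) hu)), hxw.append hxy⟩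
  · exact ⟨_, _, (mem_support_append_iff _ _).mpr (Or.inr (by simpa using h)), hzw.append hyz⟩
  · exact ⟨_, _, mem_support_tail_of_ne (by simpa using h) hu, hyw⟩
  · exact ⟨_, _, (mem_support_append_iff _ _).mpr
      (Or.inl (mem_support_tail_of_ne (by simpa using h) hu)), hzw.append hyz⟩

theorem not_hasStarCutsetAt_of_mem_Pxw (hc : c.Spanning) {v : V} (hv : v ∈ c.Pxw.support)
    (hvx : v ≠ c.x) : ¬ HasStarCutsetAt G v := by
  by_cases hvw : v = c.w
  · exact hvw ▸ not_hasStarCutsetAt_w hc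
  obtain ⟨i, hi, hil, rfl⟩ := exists_getVert_eq_of_mem_support hv hvx hvw
  have hyw : ∀ z ∈ c.Pyw.reverse.support.tail, z ∉ c.Pxw.support := fun z hz => by
    rw [c.Pyw_path.mem_support_reverse_tail_iff] at hz
    grind [c.d₂]
  refine not_hasStarCutsetAt_getVert c.Pxw_path hi hil (fun u => mem_edges_Pxw_of_adj hc hv hvx hvw)
    (Qa := cons c.adj_xy nil) (by simpa using c.y_notMem_Pxw) hyw fun u hu => ?_
  rcases hc.1 u with h | h | h | h
  · exact absurd h hu
  · refine ⟨_, c.Pyz.reverse, by simpa using h, fun z hz => ?_⟩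
    rw [c.Pyz_path.mem_support_reverse_tail_iff] at hz
    grind [c.d₁]
  · exact ⟨_, c.Pyw.reverse, by simpa using h, hyw⟩
  · refine ⟨_, c.Pzw.reverse.append c.Pyz.reverse, by simp [h], fun z hz => ?_⟩
    rw [support_tail_append, List.mem_append, c.Pzw_path.mem_support_reverse_tail_iff,
      c.Pyz_path.mem_support_reverse_tail_iff] at hz
    grind [c.d₁, c.d₃]

theorem not_hasStarCutsetAt_of_mem_Pyz (hc : c.Spanning) {v : V} (hv : v ∈ c.Pyz.support) :
    ¬ HasStarCutsetAt G v := by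
  by_cases hvy : v = c.y
  · exact hvy ▸ not_hasStarCutsetAt_y hc
  by_cases hvz : v = c.z
  · exact hvz ▸ not_hasStarCutsetAt_y hc.swap
  obtain ⟨i, hi, hil, rfl⟩ := exists_getVert_eq_of_mem_support hv hvy hvz
  have hyw : ∀ z ∈ c.Pyw.support.tail, z ∉ c.Pyz.support := fun z hz => by
    rw [c.Pyw_path.mem_support_tail_iff] at hz
    grind [c.d₄]
  have hzw : ∀ z ∈ c.Pzw.support.tail, z ∉ c.Pyz.support := fun z hz => by
    rw [c.Pzw_path.mem_support_tail_iff] at hz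
    grind [c.d₅]
  refine not_hasStarCutsetAt_getVert c.Pyz_path hi hil (fun u => mem_edges_Pyz_of_adj hc hv hvy hvz)
    hyw hzw fun u hu => ?_
  rcases hc.1 u with h | h | h | h
  · exact ⟨_, c.Pxw, h, fun z hz => c.d₁ z (List.mem_of_mem_tail hz)⟩
  · exact absurd h hu
  · exact ⟨_, c.Pyw, h, hyw⟩
  · exact ⟨_, c.Pzw, h, hzw⟩

theorem not_hasStarCutsetAt_of_mem_Pyw (hc : c.Spanning) {v : V} (hv : v ∈ c.Pyw.support) :
    ¬ HasStarCutsetAt G v := by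
  by_cases hvy : v = c.y
  · exact hvy ▸ not_hasStarCutsetAt_y hc
  by_cases hvw : v = c.w
  · exact hvw ▸ not_hasStarCutsetAt_w hc
  obtain ⟨i, hi, hil, rfl⟩ := exists_getVert_eq_of_mem_support hv hvy hvw
  have hyz : ∀ z ∈ c.Pyz.support.tail, z ∉ c.Pyw.support := fun z hz => by
    rw [c.Pyz_path.mem_support_tail_iff] at hz
    grind [c.d₄]
  have hzw : ∀ z ∈ c.Pzw.reverse.support.tail, z ∉ c.Pyw.support := fun z hz => by
    rw [c.Pzw_path.mem_support_reverse_tail_iff] at hz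
    grind [c.d₆]
  refine not_hasStarCutsetAt_getVert c.Pyw_path hi hil (fun u => mem_edges_Pyw_of_adj hc hv hvy hvw)
    hyz hzw fun u hu => ?_
  rcases hc.1 u with h | h | h | h
  · refine ⟨_, c.Pxw.reverse.append (cons c.adj_xz nil), by simp [h], fun z hz => ?_⟩
    rw [support_tail_append, List.mem_append, c.Pxw_path.mem_support_reverse_tail_iff] at hz
    simp only [support_cons, support_nil, List.tail_cons, List.mem_singleton] at hz
    grind [c.d₂, c.z_notMem_Pyw]
  · exact ⟨_, c.Pyz, h, hyz⟩
  · exact absurd h hu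
  · exact ⟨_, c.Pzw.reverse, by simpa using h, hzw⟩

theorem not_hasStarCutsetAt_of_ne_x (hc : c.Spanning) {v : V} (hvx : v ≠ c.x) :
    ¬ HasStarCutsetAt G v := by
  rcases hc.1 v with h | h | h | h
  · exact not_hasStarCutsetAt_of_mem_Pxw hc h hvx
  · exact not_hasStarCutsetAt_of_mem_Pyz hc h
  · exact not_hasStarCutsetAt_of_mem_Pyw hc h
  · exact not_hasStarCutsetAt_of_mem_Pyw hc.swap h

end Type4K4Core

/-- in a Burling-admissible type-4 subdivision of `K₄`, the common endpoint `x`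
of the two non-subdivided edges is the unique center of a star cutset. -/
theorem type4K4_unique_starCutset_center (V : Type) (G : SimpleGraph V)
    (c : Type4K4Core G) (hc : c.Spanning) :
    HasStarCutsetAt G c.x ∧ ∀ v, HasStarCutsetAt G v → v = c.x :=
  ⟨Type4K4Core.hasStarCutsetAt_x hc, fun _ hv => by_contra fun hvx =>
    Type4K4Core.not_hasStarCutsetAt_of_ne_x hc hvx hv⟩

end BurlingFormal
end
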